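/- arXiv:1003.4612 — 5 statements merged into one kernel-verified Lean document; each statement's English description precedes it below -/
import Mathlib

section
/- Let u be a linear functional on polynomials satisfying the discrete distributional equation Δ(φu) = ψu. Then the shifted functional v = E⁺(φu), defined by ⟨E⁺w, p⟩ = ⟨w, E⁻p⟩ with (E⁻p)(x) = p(x−1), satisfies the distributional equation Δ(φ·v) = (Δφ + E⁺ψ)·v, i.e., Δ(φ·E⁺(φu)) = (Δφ + E⁺ψ)·E⁺(φu). -/
open Polynomial

/-! The identity only uses that the backward shift `E⁻` is a ring endomorphism with `E⁻ ∘ E⁺ = id`.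
Testing `Δ(φu) = ψu` against `φ · E⁻p` and expanding both sides of the claim by multiplicativity
of `E⁻` gives the same combination of values of `u`. -/

theorem distributional_eq_of_shift {A G : Type*} [CommRing A] [AddCommGroup G]
    (shiftBack : A →+* A) (shiftFwd : A → A) (hshift : Function.LeftInverse shiftBack shiftFwd)
    (u : A →+ G) (φ ψ : A) (h : ∀ p, -u (φ * (p - shiftBack p)) = u (ψ * p)) (p : A) :
    -u (φ * shiftBack (φ * (p - shiftBack p))) =
      u (φ * shiftBack ((shiftFwd φ - φ + shiftFwd ψ) * p)) := by
  set q := φ * shiftBack p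
  calc -u (φ * shiftBack (φ * (p - shiftBack p)))
      = u (φ * (φ - shiftBack φ) * shiftBack p) + -u (φ * (q - shiftBack q)) := by
        rw [← map_neg, ← map_neg u, ← map_add]
        congr 1
        simp only [q, map_mul, map_sub]
        ring
    _ = u (φ * (φ - shiftBack φ) * shiftBack p) + u (ψ * q) := by rw [h]
    _ = u (φ * shiftBack ((shiftFwd φ - φ + shiftFwd ψ) * p)) := by
        rw [← map_add]
        congr 1
        simp only [q, map_mul, map_add, map_sub, hshift φ, hshift ψ]
        ring

theorem leftInverse_compRingHom_X_sub_C {R : Type*} [CommRing R] (r : R) :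
    Function.LeftInverse (compRingHom (X - C r)) (compRingHom (X + C r)) := fun p => by
  simp [comp_assoc]

/-- Encoded through `⟨E⁺(φu), p⟩ = ⟨u, φ · E⁻p⟩`, with `E⁻p = p.comp (X - C 1)`. -/
theorem shifted_functional_distributional (u : Polynomial ℝ →ₗ[ℝ] ℝ)
    (φ ψ : Polynomial ℝ)
    (h : ∀ p : Polynomial ℝ, -(u (φ * (p - p.comp (X - C 1)))) = u (ψ * p)) :
    ∀ p : Polynomial ℝ,
      -(u (φ * ((φ * (p - p.comp (X - C 1))).comp (X - C 1)))) =
        u (φ * (((φ.comp (X + C 1) - φ + ψ.comp (X + C 1)) * p).comp (X - C 1))) := by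
  have key := distributional_eq_of_shift (compRingHom (X - C 1)) (compRingHom (X + C 1))
    (leftInverse_compRingHom_X_sub_C 1) u.toAddMonoidHom φ ψ
  simpa only [coe_compRingHom_apply, LinearMap.toAddMonoidHom_coe] using key h
end

section
/- Let u be a linear functional on polynomials of the form ⟨u, p⟩ = ∫ p w for a positive weight (more generally, a positive-definite functional with associated inner product ⟨p, r⟩ = ⟨u, pr⟩). Suppose u satisfies D(φu) = ψu with polynomials φ, ψ and let σ = max{deg φ − 2, deg ψ − 1}. If (p_n) is the sequence of monic orthogonal polynomials with respect to u, then for all n, m with m + σ < n, one has ⟨u₁, p'_{n+1}·x^m⟩ = 0 where u₁ = φu; i.e., the sequence (p'_{n+1}) is quasi-orthogonal of order at most σ with respect to φu. -/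
/-!
Orthogonality of the monic sequence `p` gives `u (q * p k) = 0` whenever `deg q < k`.
Applying the Pearson equation `D(φu) = ψu` to `r = p (n+1) * q` and using the product rule,
`u (φ * p'_{n+1} * q) = -u ((φ * q') * p (n+1)) - u ((ψ * q) * p (n+1))`, and both multipliers of
`p (n+1)` have degree at most `deg q + σ + 1 ≤ n`.
-/

open Polynomial

section OrthogonalSequence

variable {R M : Type*} [CommRing R] [AddCommGroup M] [Module R M]

theorem map_mul_eq_zero_of_natDegree_lt (u : R[X] →ₗ[R] M) {p : ℕ → R[X]}
    (hmonic : ∀ n, (p n).Monic) (hdeg : ∀ n, (p n).natDegree = n)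
    (horth : ∀ n m, n ≠ m → u (p n * p m) = 0) {q : R[X]} {k : ℕ} (hq : q.natDegree < k) :
    u (q * p k) = 0 := by
  nontriviality R
  induction hd : q.natDegree using Nat.strong_induction_on generalizing q with
  | _ d ih =>
    -- Dividing by the monic `p d` leaves a constant quotient and a remainder of lower degree.
    obtain ⟨c, hc⟩ : ∃ c, q /ₘ p d = C c :=
      ⟨_, eq_C_of_natDegree_eq_zero (by rw [natDegree_divByMonic _ (hmonic d), hd, hdeg, tsub_self])⟩
    have hrem : u (q %ₘ p d * p k) = 0 := by
      by_cases hr : q %ₘ p d = 0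
      · rw [hr, zero_mul, map_zero]
      have hlt : (q %ₘ p d).natDegree < d := by
        simpa only [hdeg] using natDegree_lt_natDegree hr (degree_modByMonic_lt q (hmonic d))
      exact ih _ (hd ▸ hlt) (by omega) rfl
    have hsplit : q * p k = q %ₘ p d * p k + c • (p d * p k) := by
      conv_lhs => rw [← modByMonic_add_div q (p d), hc]
      rw [smul_eq_C_mul]
      ring
    rw [hsplit, map_add, map_smul, hrem, horth d k (by omega), smul_zero, add_zero]

theorem map_mul_derivative_mul_eq_zero (u : R[X] →ₗ[R] M) {p : ℕ → R[X]}
    (hmonic : ∀ n, (p n).Monic) (hdeg : ∀ n, (p n).natDegree = n)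
    (horth : ∀ n m, n ≠ m → u (p n * p m) = 0) {φ ψ : R[X]}
    (heq : ∀ r : R[X], -(u (φ * derivative r)) = u (ψ * r)) {n : ℕ} {q : R[X]}
    (hq : q.natDegree + max (φ.natDegree - 2) (ψ.natDegree - 1) < n) :
    u (φ * derivative (p (n + 1)) * q) = 0 := by
  have horth' {s : R[X]} (hs : s.natDegree ≤ n) : u (s * p (n + 1)) = 0 :=
    map_mul_eq_zero_of_natDegree_lt u hmonic hdeg horth (Nat.lt_succ_of_le hs)
  have hφ : u (φ * derivative q * p (n + 1)) = 0 := by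
    by_cases hq0 : q.natDegree = 0
    · rw [derivative_of_natDegree_zero hq0, mul_zero, zero_mul, map_zero]
    · have := natDegree_derivative_lt hq0
      exact horth' (natDegree_mul_le.trans (by omega))
  have hψ : u (ψ * q * p (n + 1)) = 0 := horth' (natDegree_mul_le.trans (by omega))
  have hpearson := heq (p (n + 1) * q)
  rw [derivative_mul, mul_add, map_add,
    show φ * (p (n + 1) * derivative q) = φ * derivative q * p (n + 1) by ring,
    show ψ * (p (n + 1) * q) = ψ * q * p (n + 1) by ring, hφ, hψ, add_zero, neg_eq_zero,
    ← mul_assoc] at hpearson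
  exact hpearson

end OrthogonalSequence

theorem derivatives_quasi_orthogonal_general (u : Polynomial ℝ →ₗ[ℝ] ℝ)
    (p : ℕ → Polynomial ℝ) (φ ψ : Polynomial ℝ)
    (hmonic : ∀ n, (p n).Monic) (hdeg : ∀ n, (p n).natDegree = n)
    (horth : ∀ n m, n ≠ m → u (p n * p m) = 0)
    (heq : ∀ r : Polynomial ℝ, -(u (φ * derivative r)) = u (ψ * r)) :
    ∀ n m : ℕ, m + max (φ.natDegree - 2) (ψ.natDegree - 1) < n →
      u (φ * derivative (p (n + 1)) * X ^ m) = 0 := fun _ m hσ =>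
  map_mul_derivative_mul_eq_zero u hmonic hdeg horth heq (by rwa [natDegree_X_pow m])

/-- Let u be a quasi-definite linear functional with monic orthogonal polynomial
sequence (p_n), satisfying D(φu) = ψu, and let σ = max{deg φ − 2, deg ψ − 1}.
Then ⟨φu, p'_{n+1}·x^m⟩ = 0 whenever m + σ < n: the derivatives (p'_{n+1}) are
quasi-orthogonal of order at most σ with respect to u₁ = φu. -/
theorem derivatives_quasi_orthogonal (u : Polynomial ℝ →ₗ[ℝ] ℝ)
    (p : ℕ → Polynomial ℝ) (φ ψ : Polynomial ℝ)
    (hmonic : ∀ n, (p n).Monic) (hdeg : ∀ n, (p n).natDegree = n)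
    (horth : ∀ n m, n ≠ m → u (p n * p m) = 0)
    (hqd : ∀ n, u (p n * p n) ≠ 0)
    (heq : ∀ r : Polynomial ℝ, -(u (φ * derivative r)) = u (ψ * r)) :
    ∀ n m : ℕ, m + max (φ.natDegree - 2) (ψ.natDegree - 1) < n →
      u (φ * derivative (p (n + 1)) * X ^ m) = 0 :=
  derivatives_quasi_orthogonal_general u p φ ψ hmonic hdeg horth heq
end

section
/- Let u be a positive-definite linear functional on real polynomials satisfying the differential distributional equation D(φu) = ψu with φ̃ = φ, ψ̃ = ψ polynomials. Define the Sobolev inner product ⟨p, r⟩_S = ⟨u, pr⟩ + λ⟨u, p'r'⟩ with λ ≥ 0, and the operator 𝒥 := φ·I + λ(φ' − ψ)·d/dx − λφ·d²/dx². Then for all polynomials p, r: ⟨φp, r⟩_S = ⟨u, p·𝒥r⟩. -/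
open Polynomial

namespace Polynomial

variable {R M : Type*} [CommRing R] [AddCommGroup M] [Module R M]

noncomputable def sobolevForm (u : R[X] →ₗ[R] M) (lam : R) (p r : R[X]) : M :=
  u (p * r) + lam • u (derivative p * derivative r)

noncomputable def sobolevJ (φ ψ : R[X]) (lam : R) (r : R[X]) : R[X] :=
  φ * r + C lam * (derivative φ - ψ) * derivative r - C lam * φ * derivative (derivative r)

/-- `(φp)' r' = φ' p r' + φ (p r')' − φ p r''`, and `D(φu) = ψu` moves the derivative off `p r'`. -/
theorem map_derivative_mul_mul_derivative {u : R[X] →ₗ[R] M} {φ ψ : R[X]}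
    (heq : ∀ r : R[X], -u (φ * derivative r) = u (ψ * r)) (p r : R[X]) :
    u (derivative (φ * p) * derivative r) =
      u (p * ((derivative φ - ψ) * derivative r - φ * derivative (derivative r))) := by
  calc u (derivative (φ * p) * derivative r)
      = u (derivative φ * p * derivative r) + u (φ * derivative (p * derivative r))
          - u (φ * p * derivative (derivative r)) := by
        rw [← map_add, ← map_sub]; congr 1; simp only [derivative_mul]; ring
    _ = u (derivative φ * p * derivative r) - u (ψ * (p * derivative r))
          - u (φ * p * derivative (derivative r)) := by
        rw [← heq, sub_neg_eq_add]
    _ = u (p * ((derivative φ - ψ) * derivative r - φ * derivative (derivative r))) := by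
        rw [← map_sub, ← map_sub]; congr 1; ring

theorem sobolevForm_mul_left {u : R[X] →ₗ[R] M} {φ ψ : R[X]}
    (heq : ∀ r : R[X], -u (φ * derivative r) = u (ψ * r)) (lam : R) (p r : R[X]) :
    sobolevForm u lam (φ * p) r = u (p * sobolevJ φ ψ lam r) := by
  have hJ : p * sobolevJ φ ψ lam r = φ * p * r
      + C lam * (p * ((derivative φ - ψ) * derivative r - φ * derivative (derivative r))) := by
    rw [sobolevJ]; ring
  rw [sobolevForm, hJ, map_add, ← smul_eq_C_mul, map_smul,
    map_derivative_mul_mul_derivative heq]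

end Polynomial

theorem sobolev_J_identity_general (u : Polynomial ℝ →ₗ[ℝ] ℝ) (φ ψ : Polynomial ℝ)
    (lam : ℝ)
    (heq : ∀ r : Polynomial ℝ, -(u (φ * derivative r)) = u (ψ * r)) :
    ∀ p r : Polynomial ℝ,
      u (φ * p * r) + lam * u (derivative (φ * p) * derivative r) =
        u (p * (φ * r + C lam * (derivative φ - ψ) * derivative r
            - C lam * φ * derivative (derivative r))) :=
  sobolevForm_mul_left heq lam

/-- Let u be positive-definite with D(φu) = ψu, let λ ≥ 0, and define
⟨p, r⟩_S = ⟨u, pr⟩ + λ⟨u, p'r'⟩ and 𝒥r = φr + λ(φ' − ψ)r' − λφr''.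
Then ⟨φp, r⟩_S = ⟨u, p·𝒥r⟩ for all polynomials p, r. -/
theorem sobolev_J_identity (u : Polynomial ℝ →ₗ[ℝ] ℝ) (φ ψ : Polynomial ℝ)
    (lam : ℝ) (hlam : 0 ≤ lam)
    (hpos : ∀ q : Polynomial ℝ, q ≠ 0 → 0 < u (q * q))
    (heq : ∀ r : Polynomial ℝ, -(u (φ * derivative r)) = u (ψ * r)) :
    ∀ p r : Polynomial ℝ,
      u (φ * p * r) + lam * u (derivative (φ * p) * derivative r) =
        u (p * (φ * r + C lam * (derivative φ - ψ) * derivative r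
            - C lam * φ * derivative (derivative r))) :=
  sobolev_J_identity_general u φ ψ lam heq
end

section
/- Let u be positive-definite with monic orthogonal polynomials (p_n), assume D(φu) = ψu with σ = max{deg φ − 2, deg ψ − 1}, let H = max{deg ψ − 1, deg φ}, define the Sobolev inner product ⟨p,r⟩_S = ⟨u, pr⟩ + λ⟨u, p'r'⟩ with λ > 0, let (Q_n) be the monic orthogonal polynomials with respect to ⟨·,·⟩_S, and let 𝒥r = φr + λ(φ'−ψ)r' − λφr''. Then for n ≥ H, the polynomial φ·p_n lies in the span of {Q_{n−H}, Q_{n−H+1}, …, Q_{n+deg φ}}; that is, its Fourier coefficients ⟨φ p_n, Q_ν⟩_S / ⟨Q_ν, Q_ν⟩_S vanish for ν < n − H. -/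
/-!
Integrating by parts with the Pearson equation `u (φ * r') = -u (ψ * r)` moves the Sobolev
inner product onto the first factor: `⟨φ p, q⟩_S = u (p * 𝒥 q)`. Since `deg 𝒥 q ≤ H + deg q`,
this vanishes for `p = p n` as soon as `deg q + H < n`, by orthogonality of `p n` to all
polynomials of lower degree.
-/

open Polynomial

namespace Polynomial

section Orthogonality

variable {R M : Type*} [CommRing R] [Nontrivial R] [AddCommGroup M] [Module R M]

theorem apply_mul_eq_zero_of_degree_lt (u : R[X] →ₗ[R] M) (p : ℕ → R[X])
    (hpmonic : ∀ n, (p n).Monic) (hpdeg : ∀ n, (p n).natDegree = n)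
    (hporth : ∀ n m, n ≠ m → u (p n * p m) = 0) {n : ℕ} {r : R[X]} (hr : r.degree < n) :
    u (p n * r) = 0 := by
  let S : Sequence R := ⟨p, fun k ↦ by rw [degree_eq_natDegree (hpmonic k).ne_zero, hpdeg]⟩
  have hspan : degreeLT R n ≤ LinearMap.ker (u ∘ₗ LinearMap.mulLeft R (p n)) := by
    rw [← S.span_degreeLT fun i _ ↦ (hpmonic i).leadingCoeff ▸ isUnit_one, Submodule.span_le]
    rintro _ ⟨k, hk, rfl⟩
    exact hporth n k (Set.mem_Iio.mp hk).ne'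
  exact hspan (mem_degreeLT.mpr hr)

end Orthogonality

section Sobolev

variable {R : Type*} [CommRing R]

/-- The paper's `𝒥`, adjoint to multiplication by `φ` for the Sobolev inner product. -/
noncomputable def sobolevAdjoint (φ ψ : R[X]) (lam : R) (r : R[X]) : R[X] :=
  φ * r + C lam * ((derivative φ - ψ) * derivative r) - C lam * (φ * derivative (derivative r))

theorem natDegree_mul_derivative_le (f r : R[X]) :
    (f * derivative r).natDegree ≤ f.natDegree + r.natDegree - 1 := by
  rcases Nat.eq_zero_or_pos r.natDegree with hr | hr
  · simp [derivative_of_natDegree_zero hr]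
  · have := natDegree_derivative_le r
    exact natDegree_mul_le.trans (by omega)

theorem natDegree_sobolevAdjoint_le (φ ψ : R[X]) (lam : R) (r : R[X]) :
    (sobolevAdjoint φ ψ lam r).natDegree ≤ max (ψ.natDegree - 1) φ.natDegree + r.natDegree := by
  set H := max (ψ.natDegree - 1) φ.natDegree
  have hφ : φ.natDegree ≤ H := le_max_right _ _
  have hψ : ψ.natDegree - 1 ≤ H := le_max_left _ _
  have hφψ : (derivative φ - ψ).natDegree ≤ H + 1 := by
    have := natDegree_derivative_le φ
    exact (natDegree_sub_le _ _).trans (max_le (by omega) (by omega))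
  have hfirst : (φ * r).natDegree ≤ H + r.natDegree := natDegree_mul_le.trans (by omega)
  have hsecond : ((derivative φ - ψ) * derivative r).natDegree ≤ H + r.natDegree :=
    (natDegree_mul_derivative_le _ r).trans (by omega)
  have hthird : (φ * derivative (derivative r)).natDegree ≤ H + r.natDegree := by
    have h1 := natDegree_derivative_le r
    have h2 := natDegree_derivative_le (derivative r)
    exact natDegree_mul_le.trans (by omega)
  unfold sobolevAdjoint
  refine (natDegree_sub_le _ _).trans (max_le ?_ ((natDegree_C_mul_le _ _).trans hthird))
  exact (natDegree_add_le _ _).trans (max_le hfirst ((natDegree_C_mul_le _ _).trans hsecond))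

theorem sobolev_mul_eq_apply_mul_sobolevAdjoint (u : R[X] →ₗ[R] R) (φ ψ : R[X]) (lam : R)
    (heq : ∀ r : R[X], -(u (φ * derivative r)) = u (ψ * r)) (p q : R[X]) :
    u (φ * p * q) + lam * u (derivative (φ * p) * derivative q) =
      u (p * sobolevAdjoint φ ψ lam q) := by
  have hC : ∀ x : R[X], u (C lam * x) = lam * u x := fun x ↦ by
    rw [← smul_eq_C_mul, map_smul, smul_eq_mul]
  have hparts : φ * p * q + C lam * (derivative (φ * p) * derivative q) =
      p * sobolevAdjoint φ ψ lam q + C lam * (ψ * (p * derivative q))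
        + C lam * (φ * derivative (p * derivative q)) := by
    simp only [sobolevAdjoint, derivative_mul]
    ring
  have := congrArg u hparts
  simp only [map_add, hC] at this
  rw [this, ← heq]
  ring

end Sobolev

end Polynomial

theorem phi_pn_expansion_general (u : Polynomial ℝ →ₗ[ℝ] ℝ) (φ ψ : Polynomial ℝ)
    (lam : ℝ)
    (heq : ∀ r : Polynomial ℝ, -(u (φ * derivative r)) = u (ψ * r))
    (p Q : ℕ → Polynomial ℝ)
    (hpmonic : ∀ n, (p n).Monic) (hpdeg : ∀ n, (p n).natDegree = n)
    (hporth : ∀ n m, n ≠ m → u (p n * p m) = 0)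
    (hQdeg : ∀ n, (Q n).natDegree = n) :
    ∀ n ν : ℕ, max (ψ.natDegree - 1) φ.natDegree ≤ n →
      ν + max (ψ.natDegree - 1) φ.natDegree < n →
      u (φ * p n * Q ν) + lam * u (derivative (φ * p n) * derivative (Q ν)) = 0 := by
  intro n ν _ hνn
  have hdeg : (sobolevAdjoint φ ψ lam (Q ν)).natDegree < n := by
    have := natDegree_sobolevAdjoint_le φ ψ lam (Q ν)
    rw [hQdeg] at this
    omega
  rw [sobolev_mul_eq_apply_mul_sobolevAdjoint u φ ψ lam heq]
  exact apply_mul_eq_zero_of_degree_lt u p hpmonic hpdeg hporth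
    ((degree_le_of_natDegree_le le_rfl).trans_lt (by exact_mod_cast hdeg))

/-- In the semiclassical Sobolev setting, for n ≥ H the polynomial φ·p_n lies in
the span of Q_{n−H}, …, Q_{n+deg φ}: its Sobolev–Fourier coefficients against Q_ν
vanish when ν + H < n, where H = max{deg ψ − 1, deg φ}. -/
theorem phi_pn_expansion (u : Polynomial ℝ →ₗ[ℝ] ℝ) (φ ψ : Polynomial ℝ)
    (lam : ℝ) (hlam : 0 < lam)
    (hpos : ∀ q : Polynomial ℝ, q ≠ 0 → 0 < u (q * q))
    (heq : ∀ r : Polynomial ℝ, -(u (φ * derivative r)) = u (ψ * r))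
    (p Q : ℕ → Polynomial ℝ)
    (hpmonic : ∀ n, (p n).Monic) (hpdeg : ∀ n, (p n).natDegree = n)
    (hporth : ∀ n m, n ≠ m → u (p n * p m) = 0)
    (hQmonic : ∀ n, (Q n).Monic) (hQdeg : ∀ n, (Q n).natDegree = n)
    (hQorth : ∀ n m, n ≠ m →
      u (Q n * Q m) + lam * u (derivative (Q n) * derivative (Q m)) = 0) :
    ∀ n ν : ℕ, max (ψ.natDegree - 1) φ.natDegree ≤ n →
      ν + max (ψ.natDegree - 1) φ.natDegree < n →
      u (φ * p n * Q ν) + lam * u (derivative (φ * p n) * derivative (Q ν)) = 0 :=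
  phi_pn_expansion_general u φ ψ lam heq p Q hpmonic hpdeg hporth hQdeg
end

section
/- In the setting of the previous statement (classical-type case), the Sobolev squared norms satisfy 𝐝_n² = d_n² + (λn² + δ̃_n(δ̃_n − f_{n−1}))·d²_{n−1} + ε̃_n(ε̃_n − e_{n−2} − f_{n−1}(δ̃_{n−1} − f_{n−2}))·d²_{n−2} for n ≥ 3, where f_{n−1} and e_{n−2} are the coefficients in the expansion p_n^{[−1]} = Q_n + f_{n−1}Q_{n−1} + e_{n−2}Q_{n−2}. -/
/-!
Pair the Sobolev inner product of `Q_n` with `p_n^{[-1]}`. Expanding `p_n^{[-1]}` in the `Q`-basis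
and using Sobolev orthogonality gives `𝐝_n²`; expanding it in the `p`-basis, and its derivative
as `n p_{n-1}`, reduces everything to the moments `⟨u, p_k Q_n⟩` (`k = n, n-1, n-2`) and
`⟨u, p_{n-1} Q_n'⟩`. Since `p_k` is `u`-orthogonal to all polynomials of degree `< k`, each of these
moments is a leading coefficient times `d_k²`, except the two lower ones, which are read off by
pairing the two expansions of `p_n^{[-1]}` with `p_{n-1}` and `p_{n-2}`.
-/

open Polynomial

section
variable {R : Type*} [CommRing R]

lemma degree_sub_C_coeff_mul_lt {q r : R[X]} {n : ℕ} (hq : q.degree ≤ n) (hr : r.Monic)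
    (hrn : r.natDegree = n) : (q - C (q.coeff n) * r).degree < n := by
  rw [degree_lt_iff_coeff_zero]
  intro j hj
  rcases hj.eq_or_lt with rfl | hlt
  · simp [← hrn, hr.coeff_natDegree]
  · have hrj : r.coeff j = 0 := coeff_eq_zero_of_natDegree_lt (hrn ▸ hlt)
    simp [coeff_eq_zero_of_degree_lt (hq.trans_lt (WithBot.coe_lt_coe.mpr hlt)), hrj]

lemma LinearMap.apply_eq_zero_of_degree_lt {M : Type*} [AddCommGroup M] [Module R M]
    (L : R[X] →ₗ[R] M) {p : ℕ → R[X]} (hmonic : ∀ n, (p n).Monic)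
    (hdeg : ∀ n, (p n).natDegree = n) {n : ℕ} (hL : ∀ m < n, L (p m) = 0)
    {q : R[X]} (hq : q.degree < n) : L q = 0 := by
  induction n generalizing q with
  | zero => rw [Nat.cast_zero, Nat.WithBot.lt_zero_iff, degree_eq_bot] at hq; rw [hq, map_zero]
  | succ n ih =>
    have hr := degree_sub_C_coeff_mul_lt (Order.le_of_lt_succ (by exact_mod_cast hq))
      (hmonic n) (hdeg n)
    have := ih (fun m hm => hL m (hm.trans n.lt_succ_self)) hr
    rwa [map_sub, ← smul_eq_C_mul, map_smul, hL n n.lt_succ_self, smul_zero, sub_zero] at this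

variable (u : R[X] →ₗ[R] R)

lemma LinearMap.map_mul_C_mul (a b : R[X]) (c : R) : u (a * (C c * b)) = c * u (a * b) := by
  rw [mul_left_comm, ← smul_eq_C_mul, map_smul, smul_eq_mul]

lemma LinearMap.map_mul_add_C_mul_add_C_mul (a b c d : R[X]) (x y : R) :
    u (a * (b + C x * c + C y * d)) = u (a * b) + x * u (a * c) + y * u (a * d) := by
  rw [mul_add, mul_add, map_add, map_add, u.map_mul_C_mul, u.map_mul_C_mul]

structure IsMonicOrthogonalFamily (p : ℕ → R[X]) : Prop where
  monic : ∀ n, (p n).Monic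
  natDegree_eq : ∀ n, (p n).natDegree = n
  orthogonal : ∀ n m, n ≠ m → u (p n * p m) = 0

namespace IsMonicOrthogonalFamily

variable {u} {p : ℕ → R[X]}

lemma map_mul_eq_zero_of_degree_lt (hp : IsMonicOrthogonalFamily u p) {m : ℕ} {q : R[X]}
    (hq : q.degree < m) : u (p m * q) = 0 :=
  (u.comp (LinearMap.mulLeft R (p m))).apply_eq_zero_of_degree_lt hp.monic hp.natDegree_eq
    (fun j hj => hp.orthogonal m j hj.ne') hq

lemma map_mul_eq_coeff_mul (hp : IsMonicOrthogonalFamily u p) {m : ℕ} {q : R[X]}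
    (hq : q.degree ≤ m) :
    u (p m * q) = q.coeff m * u (p m * p m) := by
  have h := hp.map_mul_eq_zero_of_degree_lt
    (degree_sub_C_coeff_mul_lt hq (hp.monic m) (hp.natDegree_eq m))
  rwa [mul_sub, map_sub, u.map_mul_C_mul, sub_eq_zero] at h

lemma map_mul_monic_eq (hp : IsMonicOrthogonalFamily u p) {m : ℕ} {q : R[X]} (hq : q.Monic)
    (hqm : q.natDegree = m) :
    u (p m * q) = u (p m * p m) := by
  rw [hp.map_mul_eq_coeff_mul (hqm ▸ degree_le_natDegree), ← hqm, hq.coeff_natDegree, one_mul]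

lemma map_pred_mul_derivative (hp : IsMonicOrthogonalFamily u p) {n : ℕ} (hn : 1 ≤ n)
    {q : R[X]} (hq : q.Monic) (hqn : q.natDegree = n) :
    u (p (n - 1) * derivative q) = n * u (p (n - 1) * p (n - 1)) := by
  have hle : (derivative q).degree ≤ (n - 1 : ℕ) :=
    degree_le_natDegree.trans (by exact_mod_cast hqn ▸ natDegree_derivative_le q)
  rw [hp.map_mul_eq_coeff_mul hle, coeff_derivative, Nat.sub_add_cancel hn, ← hqn,
    hq.coeff_natDegree, one_mul, Nat.cast_sub (hqn ▸ hn), Nat.cast_one, sub_add_cancel]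

variable {Q pm1 : ℕ → R[X]} {δ ε f e : ℕ → R}

lemma map_pred_mul_eq (hp : IsMonicOrthogonalFamily u p)
    (hQmonic : ∀ n, (Q n).Monic) (hQdeg : ∀ n, (Q n).natDegree = n)
    (hexp : ∀ n, 2 ≤ n → pm1 n = p n + C (δ n) * p (n - 1) + C (ε n) * p (n - 2))
    (hQexp : ∀ n, 2 ≤ n →
      pm1 n = Q n + C (f (n - 1)) * Q (n - 1) + C (e (n - 2)) * Q (n - 2))
    {n : ℕ} (hn : 2 ≤ n) :
    u (p (n - 1) * Q n) = (δ n - f (n - 1)) * u (p (n - 1) * p (n - 1)) := by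
  have key := congrArg (fun P => u (p (n - 1) * P)) ((hexp n hn).symm.trans (hQexp n hn))
  have hlow : (Q (n - 2)).degree < (n - 1 : ℕ) := by
    refine degree_le_natDegree.trans_lt ?_
    rw [hQdeg]; exact_mod_cast (by omega : n - 2 < n - 1)
  simp only [u.map_mul_add_C_mul_add_C_mul] at key
  rw [hp.orthogonal _ _ (by omega), hp.orthogonal (n - 1) (n - 2) (by omega),
    hp.map_mul_monic_eq (hQmonic _) (hQdeg _), hp.map_mul_eq_zero_of_degree_lt hlow] at key
  linear_combination -key

lemma map_pred_pred_mul_eq (hp : IsMonicOrthogonalFamily u p)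
    (hQmonic : ∀ n, (Q n).Monic) (hQdeg : ∀ n, (Q n).natDegree = n)
    (hexp : ∀ n, 2 ≤ n → pm1 n = p n + C (δ n) * p (n - 1) + C (ε n) * p (n - 2))
    (hQexp : ∀ n, 2 ≤ n →
      pm1 n = Q n + C (f (n - 1)) * Q (n - 1) + C (e (n - 2)) * Q (n - 2))
    {n : ℕ} (hn : 3 ≤ n) :
    u (p (n - 2) * Q n) = (ε n - e (n - 2) - f (n - 1) * (δ (n - 1) - f (n - 2)))
      * u (p (n - 2) * p (n - 2)) := by
  have key := congrArg (fun P => u (p (n - 2) * P))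
    ((hexp n (by omega)).symm.trans (hQexp n (by omega)))
  have hprev := hp.map_pred_mul_eq hQmonic hQdeg hexp hQexp (n := n - 1) (by omega)
  rw [show n - 1 - 1 = n - 2 by omega] at hprev
  simp only [u.map_mul_add_C_mul_add_C_mul] at key
  rw [hp.orthogonal _ _ (by omega), hp.orthogonal (n - 2) (n - 1) (by omega),
    hp.map_mul_monic_eq (hQmonic _) (hQdeg _), hprev] at key
  linear_combination -key

end IsMonicOrthogonalFamily

end

theorem sobolev_norm_recurrence_general (u : Polynomial ℝ →ₗ[ℝ] ℝ)
    (lam : ℝ)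
    (p Q pm1 : ℕ → Polynomial ℝ) (δ ε f e : ℕ → ℝ)
    (hpmonic : ∀ n, (p n).Monic) (hpdeg : ∀ n, (p n).natDegree = n)
    (hporth : ∀ n m, n ≠ m → u (p n * p m) = 0)
    (hQmonic : ∀ n, (Q n).Monic) (hQdeg : ∀ n, (Q n).natDegree = n)
    (hQorth : ∀ n m, n ≠ m →
      u (Q n * Q m) + lam * u (derivative (Q n) * derivative (Q m)) = 0)
    (hexp : ∀ n, 2 ≤ n → pm1 n = p n + C (δ n) * p (n - 1) + C (ε n) * p (n - 2))
    (hder : ∀ n, 2 ≤ n → derivative (pm1 n) = C (n : ℝ) * p (n - 1))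
    (hQexp : ∀ n, 2 ≤ n →
      pm1 n = Q n + C (f (n - 1)) * Q (n - 1) + C (e (n - 2)) * Q (n - 2)) :
    ∀ n, 3 ≤ n →
      u (Q n * Q n) + lam * u (derivative (Q n) * derivative (Q n)) =
        u (p n * p n)
          + (lam * (n : ℝ) ^ 2 + δ n * (δ n - f (n - 1))) * u (p (n - 1) * p (n - 1))
          + ε n * (ε n - e (n - 2) - f (n - 1) * (δ (n - 1) - f (n - 2)))
              * u (p (n - 2) * p (n - 2)) := by
  intro n hn
  have hp : IsMonicOrthogonalFamily u p := ⟨hpmonic, hpdeg, hporth⟩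
  -- `𝐝_n² = ⟨Q_n, p_n^{[-1]}⟩_S`, expanded once in the `Q`-basis and once in the `p`-basis
  have hQ : u (Q n * pm1 n) = u (Q n * Q n) + f (n - 1) * u (Q n * Q (n - 1))
      + e (n - 2) * u (Q n * Q (n - 2)) := by
    rw [hQexp n (by omega), u.map_mul_add_C_mul_add_C_mul]
  have hQ' : u (derivative (Q n) * derivative (pm1 n)) =
      u (derivative (Q n) * derivative (Q n))
      + f (n - 1) * u (derivative (Q n) * derivative (Q (n - 1)))
      + e (n - 2) * u (derivative (Q n) * derivative (Q (n - 2))) := by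
    rw [hQexp n (by omega), derivative_add, derivative_add, derivative_C_mul, derivative_C_mul,
      u.map_mul_add_C_mul_add_C_mul]
  have hP : u (Q n * pm1 n) = u (p n * Q n) + δ n * u (p (n - 1) * Q n)
      + ε n * u (p (n - 2) * Q n) := by
    rw [hexp n (by omega), u.map_mul_add_C_mul_add_C_mul, mul_comm (Q n), mul_comm (Q n),
      mul_comm (Q n)]
  have hP' : u (derivative (Q n) * derivative (pm1 n)) =
      n * u (p (n - 1) * derivative (Q n)) := by
    rw [hder n (by omega), u.map_mul_C_mul, mul_comm (derivative (Q n))]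
  linear_combination lam * (hP' - hQ') + hP - hQ
    - f (n - 1) * hQorth n (n - 1) (by omega) - e (n - 2) * hQorth n (n - 2) (by omega)
    + hp.map_mul_monic_eq (hQmonic n) (hQdeg n)
    + δ n * hp.map_pred_mul_eq hQmonic hQdeg hexp hQexp (n := n) (by omega)
    + ε n * hp.map_pred_pred_mul_eq hQmonic hQdeg hexp hQexp hn
    + lam * n * hp.map_pred_mul_derivative (by omega) (hQmonic n) (hQdeg n)

/-- In the classical Sobolev setting, the Sobolev squared norms satisfy
𝐝_n² = d_n² + (λn² + δ̃_n(δ̃_n − f_{n−1}))d²_{n−1}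
      + ε̃_n(ε̃_n − e_{n−2} − f_{n−1}(δ̃_{n−1} − f_{n−2}))d²_{n−2} for n ≥ 3. -/
theorem sobolev_norm_recurrence (u : Polynomial ℝ →ₗ[ℝ] ℝ)
    (lam : ℝ) (hlam : 0 < lam)
    (hpos : ∀ q : Polynomial ℝ, q ≠ 0 → 0 < u (q * q))
    (p Q pm1 : ℕ → Polynomial ℝ) (δ ε f e : ℕ → ℝ)
    (hpmonic : ∀ n, (p n).Monic) (hpdeg : ∀ n, (p n).natDegree = n)
    (hporth : ∀ n m, n ≠ m → u (p n * p m) = 0)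
    (hQmonic : ∀ n, (Q n).Monic) (hQdeg : ∀ n, (Q n).natDegree = n)
    (hQorth : ∀ n m, n ≠ m →
      u (Q n * Q m) + lam * u (derivative (Q n) * derivative (Q m)) = 0)
    (hm1monic : ∀ n, (pm1 n).Monic) (hm1deg : ∀ n, (pm1 n).natDegree = n)
    (hexp : ∀ n, 2 ≤ n → pm1 n = p n + C (δ n) * p (n - 1) + C (ε n) * p (n - 2))
    (hder : ∀ n, 2 ≤ n → derivative (pm1 n) = C (n : ℝ) * p (n - 1))
    (hQexp : ∀ n, 2 ≤ n →
      pm1 n = Q n + C (f (n - 1)) * Q (n - 1) + C (e (n - 2)) * Q (n - 2)) :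
    ∀ n, 3 ≤ n →
      u (Q n * Q n) + lam * u (derivative (Q n) * derivative (Q n)) =
        u (p n * p n)
          + (lam * (n : ℝ) ^ 2 + δ n * (δ n - f (n - 1))) * u (p (n - 1) * p (n - 1))
          + ε n * (ε n - e (n - 2) - f (n - 1) * (δ (n - 1) - f (n - 2)))
              * u (p (n - 2) * p (n - 2)) :=
  sobolev_norm_recurrence_general u lam p Q pm1 δ ε f e hpmonic hpdeg hporth hQmonic hQdeg hQorth
    hexp hder hQexp
end
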